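/- Let μ ≤ 0 and σ > 0. Then the optimal Gaussian monopoly revenue satisfies R(μ, σ²/n) ≤ √(2π)·σ/√n for every n ∈ N. -/

import Mathlib

open MeasureTheory

/-- The standard normal density. -/
noncomputable def stdPDF (x : ℝ) : ℝ := (Real.sqrt (2 * Real.pi))⁻¹ * Real.exp (-x ^ 2 / 2)

/-- The standard normal cumulative distribution function. -/
noncomputable def Phi (x : ℝ) : ℝ := ∫ t in Set.Iic x, stdPDF t

lemma stdPDF_eq (x : ℝ) : stdPDF x = (Real.sqrt (2 * Real.pi))⁻¹ * Real.exp (-(1/2) * x ^ 2) := by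
  unfold stdPDF; ring_nf

lemma integrable_stdPDF : Integrable stdPDF := by
  have h : Integrable fun x : ℝ => Real.exp (-(1/2) * x ^ 2) :=
    integrable_exp_neg_mul_sq (by norm_num)
  have := h.const_mul (Real.sqrt (2 * Real.pi))⁻¹
  exact this.congr (by filter_upwards with x using (stdPDF_eq x).symm)

lemma stdPDF_nonneg (x : ℝ) : 0 ≤ stdPDF x :=
  mul_nonneg (inv_nonneg.2 (Real.sqrt_nonneg _)) (Real.exp_nonneg _)

lemma integral_stdPDF : ∫ x, stdPDF x = 1 := by
  have h : (∫ x : ℝ, Real.exp (-(1/2) * x ^ 2)) = Real.sqrt (Real.pi / (1/2)) :=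
    integral_gaussian (1/2)
  have : ∫ x, stdPDF x = (Real.sqrt (2 * Real.pi))⁻¹ * Real.sqrt (Real.pi / (1/2)) := by
    simp_rw [stdPDF_eq]
    rw [integral_const_mul, h]
  rw [this]
  have : Real.pi / (1/2 : ℝ) = 2 * Real.pi := by ring
  rw [this, inv_mul_cancel₀]
  positivity

lemma Phi_le_one (x : ℝ) : Phi x ≤ 1 := by
  rw [← integral_stdPDF]
  exact setIntegral_le_integral integrable_stdPDF
    (Filter.Eventually.of_forall fun t => stdPDF_nonneg t)

lemma one_sub_Phi (x : ℝ) : 1 - Phi x = ∫ t in Set.Ioi x, stdPDF t := by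
  have h := intervalIntegral.integral_Iic_add_Ioi (μ := volume) (b := x)
    integrable_stdPDF.integrableOn integrable_stdPDF.integrableOn
  rw [integral_stdPDF] at h
  unfold Phi
  linarith

lemma tail_bound {z : ℝ} (hz : 0 ≤ z) : 1 - Phi z ≤ Real.exp (-z ^ 2 / 2) := by
  rw [one_sub_Phi]
  have hcomp : Integrable (fun t => stdPDF (t - z)) :=
    integrable_stdPDF.comp_sub_right z
  have hb : ∀ t ∈ Set.Ioi z, stdPDF t ≤ Real.exp (-z ^ 2 / 2) * stdPDF (t - z) := by
    intro t ht
    simp only [Set.mem_Ioi] at ht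
    unfold stdPDF
    rw [mul_left_comm]
    apply mul_le_mul_of_nonneg_left _ (inv_nonneg.2 (Real.sqrt_nonneg _))
    rw [← Real.exp_add, Real.exp_le_exp]
    nlinarith
  calc ∫ t in Set.Ioi z, stdPDF t
      ≤ ∫ t in Set.Ioi z, Real.exp (-z ^ 2 / 2) * stdPDF (t - z) := by
        apply setIntegral_mono_on
        · exact integrable_stdPDF.integrableOn
        · exact (hcomp.const_mul _).integrableOn
        · exact measurableSet_Ioi
        · exact hb
    _ ≤ ∫ t, Real.exp (-z ^ 2 / 2) * stdPDF (t - z) := by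
        apply setIntegral_le_integral (hcomp.const_mul _)
        filter_upwards with t
        exact mul_nonneg (Real.exp_nonneg _) (stdPDF_nonneg _)
    _ = Real.exp (-z ^ 2 / 2) := by
        rw [integral_const_mul, integral_sub_right_eq_self stdPDF z, integral_stdPDF, mul_one]

lemma sqrt_two_pi_ge_one : (1 : ℝ) ≤ Real.sqrt (2 * Real.pi) := by
  rw [show (1:ℝ) = Real.sqrt 1 by simp]
  exact Real.sqrt_le_sqrt (by nlinarith [Real.pi_gt_three])

theorem stmt7 (μ σ : ℝ) (hμ : μ ≤ 0) (hσ : 0 < σ) (n : ℕ) (hn : 0 < n) :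
    (⨆ p : ℝ, p * (1 - Phi ((p - μ) * Real.sqrt n / σ)))
      ≤ Real.sqrt (2 * Real.pi) * σ / Real.sqrt n := by
  set s := Real.sqrt n with hs_def
  have hs : 0 < s := Real.sqrt_pos.2 (by exact_mod_cast hn)
  have hRHS : 0 ≤ Real.sqrt (2 * Real.pi) * σ / s := by positivity
  apply ciSup_le
  intro p
  rcases le_or_gt p 0 with hp | hp
  · refine le_trans ?_ hRHS
    have := Phi_le_one ((p - μ) * s / σ)
    nlinarith
  · set x := (p - μ) * s / σ with hx_def
    set t := p * s / σ with ht_def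
    have ht : 0 < t := by positivity
    have hxt : t ≤ x := by
      rw [hx_def, ht_def]
      gcongr
      linarith
    have h1 : 1 - Phi x ≤ Real.exp (-t ^ 2 / 2) := by
      refine le_trans (tail_bound (le_trans ht.le hxt)) ?_
      apply Real.exp_le_exp.2
      nlinarith
    have hkey : t * Real.exp (-t ^ 2 / 2) ≤ 1 := by
      have h2 := Real.add_one_le_exp (t ^ 2 / 2)
      have h3 : Real.exp (-t ^ 2 / 2) = (Real.exp (t ^ 2 / 2))⁻¹ := by
        rw [← Real.exp_neg]; ring_nf
      rw [h3]
      rw [mul_inv_le_iff₀ (Real.exp_pos _)]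
      nlinarith
    have hpt : p = σ / s * t := by
      rw [ht_def]; field_simp
    calc p * (1 - Phi x) ≤ p * Real.exp (-t ^ 2 / 2) :=
          mul_le_mul_of_nonneg_left h1 hp.le
      _ = σ / s * (t * Real.exp (-t ^ 2 / 2)) := by rw [hpt]; ring
      _ ≤ σ / s * 1 := by
          apply mul_le_mul_of_nonneg_left hkey (by positivity)
      _ ≤ Real.sqrt (2 * Real.pi) * σ / s := by
          rw [mul_one, mul_div_assoc]
          nlinarith [sqrt_two_pi_ge_one, div_pos hσ hs]
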